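/- Karcher's symmetric Weierstrass function wp(z) := (℘(z - ω₁ - ω₂) - e₃)/c, with c = √((e₁-e₃)(e₃-e₂)), satisfies wp(-z̄ + 2ω₁) = -conj(wp(z)) whenever the lattice is rhombic and the branch of c is chosen purely imaginary; in particular wp is determined on all of the torus by its restriction to one eighth of a fundamental domain. -/

import Mathlib

open Complex

def latticeSet (ω₁ ω₂ : ℂ) : Set ℂ := {z | ∃ m n : ℤ, z = 2*m*ω₁ + 2*n*ω₂}

noncomputable def wpFun (ω₁ ω₂ : ℂ) (z : ℂ) : ℂ :=
  1/z^2 + ∑' l : {l : ℂ // l ∈ latticeSet ω₁ ω₂ ∧ l ≠ 0},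
    (1/(z - (l : ℂ))^2 - 1/(l : ℂ)^2)

/-- Karcher's symmetric Weierstrass function wp(z) = (℘(z-ω₁-ω₂) - e₃)/c. -/
noncomputable def karcherWp (ω₁ ω₂ c e₃ : ℂ) (z : ℂ) : ℂ :=
  (wpFun ω₁ ω₂ (z - ω₁ - ω₂) - e₃) / c

namespace KW

/-- parametrization of the lattice by `ℤ × ℤ`. -/
noncomputable def φ (a b : ℝ) (p : ℤ × ℤ) : ℂ :=
  2*p.1*((a:ℂ) - b*Complex.I) + 2*p.2*((a:ℂ) + b*Complex.I)

lemma φ_re (a b : ℝ) (p : ℤ × ℤ) : (φ a b p).re = 2*(p.1+p.2)*a := by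
  simp [φ, Complex.add_re, Complex.mul_re]; ring

lemma φ_im (a b : ℝ) (p : ℤ × ℤ) : (φ a b p).im = 2*(p.2-p.1)*b := by
  simp [φ, Complex.add_im, Complex.mul_im]; ring

lemma φ_norm (a b : ℝ) (ha : 0 < a) (hb : 0 < b) (p : ℤ × ℤ) :
    min a b * (|(p.1 : ℝ)| + |(p.2 : ℝ)|) ≤ ‖φ a b p‖ := by
  have h1 : |(φ a b p).re| ≤ ‖φ a b p‖ := Complex.abs_re_le_norm _
  have h2 : |(φ a b p).im| ≤ ‖φ a b p‖ := Complex.abs_im_le_norm _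
  rw [φ_re] at h1
  rw [φ_im] at h2
  have e1 : |2*((p.1:ℝ)+p.2)*a| = 2*a*|(p.1:ℝ)+p.2| := by
    rw [abs_mul, abs_of_pos ha, abs_mul]; simp [abs_of_nonneg]; ring
  have e2 : |2*((p.2:ℝ)-p.1)*b| = 2*b*|(p.2:ℝ)-p.1| := by
    rw [abs_mul, abs_of_pos hb, abs_mul]; simp [abs_of_nonneg]; ring
  rw [e1] at h1; rw [e2] at h2
  have hm : min a b ≤ a := min_le_left _ _
  have hn : min a b ≤ b := min_le_right _ _
  have k1 : |(p.1:ℝ)| + |(p.2:ℝ)| ≤ |(p.1:ℝ)+p.2| + |(p.2:ℝ)-p.1| := by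
    have u1 : |(2:ℝ)*p.1| ≤ |(p.1:ℝ)+p.2| + |(p.2:ℝ)-p.1| := by
      calc |(2:ℝ)*p.1| = |((p.1:ℝ)+p.2) - ((p.2:ℝ)-p.1)| := by ring_nf
        _ ≤ _ := abs_sub _ _
    have u2 : |(2:ℝ)*p.2| ≤ |(p.1:ℝ)+p.2| + |(p.2:ℝ)-p.1| := by
      calc |(2:ℝ)*p.2| = |((p.1:ℝ)+p.2) + ((p.2:ℝ)-p.1)| := by ring_nf
        _ ≤ _ := abs_add_le _ _
    rw [abs_mul] at u1 u2; norm_num at u1 u2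
    linarith
  have q1 : min a b * |(p.1:ℝ)+p.2| ≤ ‖φ a b p‖ / 2 := by
    have : a * |(p.1:ℝ)+p.2| ≤ ‖φ a b p‖ / 2 := by linarith
    nlinarith [abs_nonneg ((p.1:ℝ)+p.2)]
  have q2 : min a b * |(p.2:ℝ)-p.1| ≤ ‖φ a b p‖ / 2 := by
    have : b * |(p.2:ℝ)-p.1| ≤ ‖φ a b p‖ / 2 := by linarith
    nlinarith [abs_nonneg ((p.2:ℝ)-p.1)]
  have hmin : (0:ℝ) < min a b := lt_min ha hb
  nlinarith [mul_le_mul_of_nonneg_left k1 (le_of_lt hmin)]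

lemma φ_inj (a b : ℝ) (ha : 0 < a) (hb : 0 < b) : Function.Injective (φ a b) := by
  intro p q h
  have hre : (φ a b p).re = (φ a b q).re := by rw [h]
  have him : (φ a b p).im = (φ a b q).im := by rw [h]
  rw [φ_re, φ_re] at hre; rw [φ_im, φ_im] at him
  have h1 : (p.1:ℝ) + p.2 = q.1 + q.2 :=
    mul_right_cancel₀ (ne_of_gt ha) (by linarith)
  have h2 : (p.2:ℝ) - p.1 = q.2 - q.1 :=
    mul_right_cancel₀ (ne_of_gt hb) (by linarith)
  have e1 : p.1 + p.2 = q.1 + q.2 := by exact_mod_cast h1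
  have e2 : p.2 - p.1 = q.2 - q.1 := by exact_mod_cast h2
  have : p.1 = q.1 ∧ p.2 = q.2 := by omega
  exact Prod.ext this.1 this.2

lemma φ_ne_zero (a b : ℝ) (ha : 0 < a) (hb : 0 < b) {p : ℤ × ℤ} (hp : p ≠ 0) : φ a b p ≠ 0 := by
  intro h
  apply hp
  have h0 : φ a b 0 = 0 := by simp [φ]
  exact φ_inj a b ha hb (h.trans h0.symm)

-- base summability over ℤ × ℤ
lemma base_summable : Summable (fun p : ℤ × ℤ => 1 / ((|(p.1:ℝ)| + |(p.2:ℝ)|))^3) := by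
  have h := EisensteinSeries.summable_one_div_norm_rpow (k := 3) (by norm_num)
  have h2 : Summable fun p : ℤ × ℤ => ‖(finTwoArrowEquiv ℤ).symm p‖ ^ (-3 : ℝ) :=
    (Equiv.summable_iff (finTwoArrowEquiv ℤ).symm).mpr h
  refine h2.of_nonneg_of_le (fun p => by positivity) (fun p => ?_)
  have hn : ‖(finTwoArrowEquiv ℤ).symm p‖ = max (|(p.1:ℝ)|) (|(p.2:ℝ)|) := by
    rw [EisensteinSeries.norm_eq_max_natAbs]
    simp [finTwoArrowEquiv, Nat.cast_max, Nat.cast_natAbs]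
  rw [hn]
  rcases eq_or_ne p 0 with rfl | hp
  · simp [Real.rpow_neg]
  · have hpos : (0:ℝ) < max (|(p.1:ℝ)|) (|(p.2:ℝ)|) := by
      have : p.1 ≠ 0 ∨ p.2 ≠ 0 := by
        by_contra hc; push_neg at hc; exact hp (Prod.ext hc.1 hc.2)
      rcases this with h | h
      · exact lt_max_of_lt_left (by exact_mod_cast abs_pos.mpr (by exact_mod_cast h))
      · exact lt_max_of_lt_right (by exact_mod_cast abs_pos.mpr (by exact_mod_cast h))
    rw [Real.rpow_neg (le_of_lt hpos),
      show ((3:ℝ)) = ((3:ℕ):ℝ) by norm_num, Real.rpow_natCast, one_div]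
    have hle : max (|(p.1:ℝ)|) (|(p.2:ℝ)|) ≤ |(p.1:ℝ)| + |(p.2:ℝ)| :=
      max_le_add_of_nonneg (abs_nonneg _) (abs_nonneg _)
    gcongr

lemma finite_small (R : ℝ) : {p : ℤ × ℤ | (|(p.1:ℝ)| + |(p.2:ℝ)|) < R}.Finite := by
  apply Set.Finite.subset (Set.finite_Icc (α := ℤ × ℤ) (-⌈R⌉, -⌈R⌉) (⌈R⌉, ⌈R⌉))
  intro p hp
  simp only [Set.mem_setOf_eq] at hp
  have h1 : (|(p.1:ℝ)|) ≤ R := by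
    have := abs_nonneg ((p.2:ℝ)); linarith
  have h2 : (|(p.2:ℝ)|) ≤ R := by
    have := abs_nonneg ((p.1:ℝ)); linarith
  have hc : R ≤ (⌈R⌉ : ℝ) := Int.le_ceil R
  have k1 : |p.1| ≤ ⌈R⌉ := by exact_mod_cast h1.trans hc
  have k2 : |p.2| ≤ ⌈R⌉ := by exact_mod_cast h2.trans hc
  rw [abs_le] at k1 k2
  exact Set.mem_Icc.mpr ⟨⟨k1.1, k2.1⟩, ⟨k1.2, k2.2⟩⟩

lemma sumF (a b : ℝ) (ha : 0 < a) (hb : 0 < b) (w : ℂ) :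
    Summable (fun p : ℤ × ℤ => 1/(w - φ a b p)^2 - 1/(φ a b p)^2) := by
  rcases eq_or_ne w 0 with rfl | hw
  · refine summable_zero.congr fun p => ?_
    rw [zero_sub, neg_sq, sub_self]
  · set d := min a b with hd
    have hd0 : 0 < d := lt_min ha hb
    set W := ‖w‖ with hWdef
    have hW0 : 0 < W := by simpa [hWdef] using hw
    set R : ℝ := max 1 (2*W/d) with hR
    apply Summable.of_norm_bounded_eventually
      (g := fun p : ℤ × ℤ => (10*W/d^3) * (1/((|(p.1:ℝ)| + |(p.2:ℝ)|))^3))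
      (base_summable.mul_left _)
    rw [Filter.eventually_cofinite]
    apply Set.Finite.subset (finite_small R)
    intro p hp
    simp only [Set.mem_setOf_eq] at hp ⊢
    by_contra hcon
    push_neg at hcon
    apply hp
    set s := (|(p.1:ℝ)| + |(p.2:ℝ)|) with hs
    have hs1 : 1 ≤ s := le_trans (le_max_left _ _) hcon
    have hs0 : 0 < s := by linarith
    have hLb : d * s ≤ ‖φ a b p‖ := φ_norm a b ha hb p
    set L := ‖φ a b p‖ with hLdef
    have hL2W : 2*W ≤ L := by
      have h' : 2*W/d ≤ s := le_trans (le_max_right _ _) hcon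
      calc 2*W = d * (2*W/d) := by field_simp
        _ ≤ d * s := by gcongr
        _ ≤ L := hLb
    have hL0 : 0 < L := by linarith
    have hφ0 : φ a b p ≠ 0 := by
      intro h0; rw [h0] at hLdef; simp at hLdef; linarith [hLdef ▸ hL0]
    have hwl : L/2 ≤ ‖w - φ a b p‖ := by
      have h1 : L - W ≤ ‖φ a b p - w‖ := by
        have := norm_sub_norm_le (φ a b p) w
        exact this
      have h2 : ‖φ a b p - w‖ = ‖w - φ a b p‖ := by
        rw [← norm_neg]; congr 1; ring
      rw [h2] at h1; linarith
    have hwl0 : w - φ a b p ≠ 0 := by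
      intro h0
      rw [h0] at hwl; simp at hwl; linarith
    have hid : 1/(w - φ a b p)^2 - 1/(φ a b p)^2
        = w*(2*φ a b p - w) / ((w - φ a b p)^2 * (φ a b p)^2) := by
      field_simp
      ring
    rw [hid]
    have h2L : ‖2*φ a b p - w‖ ≤ 5/2*L := by
      calc ‖2*φ a b p - w‖ ≤ ‖2*φ a b p‖ + ‖w‖ :=
            by simpa using norm_sub_le (2*φ a b p) w
        _ = 2*L + W := by rw [norm_mul]; simp [hLdef, hWdef]
        _ ≤ 5/2*L := by linarith
    have habs : ‖w*(2*φ a b p - w) / ((w - φ a b p)^2 * (φ a b p)^2)‖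
        = W * ‖2*φ a b p - w‖ / (‖w - φ a b p‖^2 * L^2) := by
      rw [norm_div, norm_mul, norm_mul, norm_pow, norm_pow]
    rw [habs]
    calc W * ‖2*φ a b p - w‖ / (‖w - φ a b p‖^2 * L^2)
        ≤ W * (5/2*L) / ((L/2)^2 * L^2) := by
          gcongr
      _ = 10*W/L^3 := by field_simp; ring
      _ ≤ 10*W/(d*s)^3 := by gcongr
      _ = (10*W/d^3) * (1/s^3) := by field_simp

lemma finite_small_int (R : ℝ) : {n : ℤ | (|(n:ℝ)|) < R}.Finite := by
  apply Set.Finite.subset (Set.finite_Icc (-⌈R⌉) ⌈R⌉)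
  intro n hn
  simp only [Set.mem_setOf_eq] at hn
  have hc : R ≤ (⌈R⌉ : ℝ) := Int.le_ceil R
  have k : |n| ≤ ⌈R⌉ := by exact_mod_cast (le_of_lt hn).trans hc
  rw [abs_le] at k
  exact Set.mem_Icc.mpr k

lemma sumU (a b : ℝ) (ha : 0 < a) (hb : 0 < b) (w : ℂ) (m : ℤ) :
    Summable (fun n : ℤ => 1/(w - φ a b (m, n))^2) := by
  have hbase : Summable (fun n : ℤ => (1/b^2) * (1/(n:ℝ)^2)) :=
    ((Real.summable_one_div_int_pow (p := 2)).mpr one_lt_two).mul_left _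
  apply Summable.of_norm_bounded_eventually hbase
  rw [Filter.eventually_cofinite]
  apply Set.Finite.subset (finite_small_int (2*|(m:ℝ)| + |w.im|/b + 1))
  intro n hn
  simp only [Set.mem_setOf_eq] at hn ⊢
  by_contra hcon
  push_neg at hcon
  apply hn
  have hn1 : (1:ℝ) ≤ |(n:ℝ)| := by
    have := abs_nonneg ((m:ℝ)); have := abs_nonneg w.im
    have hb' := hb
    nlinarith [div_nonneg (abs_nonneg w.im) hb.le]
  have him : |w.im - 2*((n:ℝ)-m)*b| ≤ ‖w - φ a b (m, n)‖ := by
    have h := Complex.abs_im_le_norm (w - φ a b (m, n))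
    have : (w - φ a b (m, n)).im = w.im - 2*((n:ℝ)-m)*b := by
      rw [Complex.sub_im, φ_im]
    rwa [this] at h
  have hlow : b * |(n:ℝ)| ≤ |w.im - 2*((n:ℝ)-m)*b| := by
    have h1 : 2*b*|(n:ℝ)-m| - |w.im| ≤ |w.im - 2*((n:ℝ)-m)*b| := by
      have := abs_sub_abs_le_abs_sub (2*((n:ℝ)-m)*b) w.im
      have e : |2*((n:ℝ)-m)*b| = 2*b*|(n:ℝ)-m| := by
        rw [abs_mul, abs_mul, abs_of_pos hb]; simp; ring
      have e2 : |2*((n:ℝ)-m)*b - w.im| = |w.im - 2*((n:ℝ)-m)*b| := abs_sub_comm _ _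
      rw [e, e2] at this
      linarith
    have h2 : |(n:ℝ)| - |(m:ℝ)| ≤ |(n:ℝ)-m| := abs_sub_abs_le_abs_sub _ _
    have h3 : |w.im| ≤ b * (|w.im|/b) := by field_simp; exact le_rfl
    nlinarith [abs_nonneg ((n:ℝ)-m)]
  have hpos : 0 < b * |(n:ℝ)| := by positivity
  have hterm : ‖(1:ℂ)/(w - φ a b (m, n))^2‖ = 1 / ‖w - φ a b (m, n)‖^2 := by
    rw [norm_div, norm_one, norm_pow]
  rw [hterm]
  have habs : b * |(n:ℝ)| ≤ ‖w - φ a b (m, n)‖ := le_trans hlow him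
  calc 1 / ‖w - φ a b (m, n)‖^2 ≤ 1 / (b * |(n:ℝ)|)^2 := by
        gcongr
    _ = (1/b^2) * (1/(n:ℝ)^2) := by
        rw [mul_pow, _root_.sq_abs]; field_simp

-- continuing namespace KW

noncomputable def E (a b : ℝ) (ha : 0 < a) (hb : 0 < b) :
    {p : ℤ × ℤ // p ≠ 0} ≃
      {l : ℂ // l ∈ latticeSet ((a:ℂ) - b*Complex.I) ((a:ℂ) + b*Complex.I) ∧ l ≠ 0} :=
  Equiv.ofBijective
    (fun p => ⟨φ a b p.1, ⟨p.1.1, p.1.2, rfl⟩, φ_ne_zero a b ha hb p.2⟩)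
    (by
      constructor
      · intro p q h
        exact Subtype.ext (φ_inj a b ha hb (congrArg Subtype.val h))
      · rintro ⟨l, ⟨m, n, rfl⟩, h0⟩
        refine ⟨⟨(m, n), fun hmn => h0 ?_⟩, rfl⟩
        have : φ a b (m, n) = 0 := by rw [hmn]; simp [φ]
        exact this)

lemma tsum_transfer (a b : ℝ) (ha : 0 < a) (hb : 0 < b) (f : ℂ → ℂ) :
    (∑' l : {l : ℂ // l ∈ latticeSet ((a:ℂ) - b*Complex.I) ((a:ℂ) + b*Complex.I) ∧ l ≠ 0},
      f (l : ℂ)) = ∑' p : {p : ℤ × ℤ // p ≠ 0}, f (φ a b (p : ℤ × ℤ)) :=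
  ((E a b ha hb).tsum_eq (fun l => f (l : ℂ))).symm

/-- symmetry equivalence of the punctured lattice induced by an involution -/
def symEquiv (ω₁ ω₂ : ℂ) (g : ℂ → ℂ) (hg : Function.Involutive g)
    (hmem : ∀ l, l ∈ latticeSet ω₁ ω₂ → g l ∈ latticeSet ω₁ ω₂)
    (h0 : ∀ l : ℂ, l ≠ 0 → g l ≠ 0) :
    {l : ℂ // l ∈ latticeSet ω₁ ω₂ ∧ l ≠ 0} ≃ {l : ℂ // l ∈ latticeSet ω₁ ω₂ ∧ l ≠ 0} where
  toFun l := ⟨g l, hmem l l.2.1, h0 l l.2.2⟩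
  invFun l := ⟨g l, hmem l l.2.1, h0 l l.2.2⟩
  left_inv l := Subtype.ext (hg l)
  right_inv l := Subtype.ext (hg l)

lemma wp_even (ω₁ ω₂ : ℂ) (w : ℂ) : wpFun ω₁ ω₂ (-w) = wpFun ω₁ ω₂ w := by
  have hmem : ∀ l, l ∈ latticeSet ω₁ ω₂ → -l ∈ latticeSet ω₁ ω₂ := by
    rintro l ⟨m, n, rfl⟩
    exact ⟨-m, -n, by push_cast; ring⟩
  have h0 : ∀ l : ℂ, l ≠ 0 → -l ≠ 0 := fun l hl => neg_ne_zero.mpr hl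
  set N := symEquiv ω₁ ω₂ (fun x => -x) (fun x => neg_neg x) hmem h0 with hN
  unfold wpFun
  congr 1
  · rw [neg_sq]
  · calc (∑' l : {l : ℂ // l ∈ latticeSet ω₁ ω₂ ∧ l ≠ 0}, (1/(-w - (l:ℂ))^2 - 1/(l:ℂ)^2))
        = ∑' l : {l : ℂ // l ∈ latticeSet ω₁ ω₂ ∧ l ≠ 0},
            (1/(w - (N l : ℂ))^2 - 1/(N l : ℂ)^2) := by
          refine tsum_congr fun l => ?_
          have h1 : (N l : ℂ) = -(l : ℂ) := rfl
          rw [h1]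
          rw [show w - -(l:ℂ) = -(-w - (l:ℂ)) by ring, neg_sq, neg_sq]
      _ = _ := N.tsum_eq (fun l : {l : ℂ // l ∈ latticeSet ω₁ ω₂ ∧ l ≠ 0} =>
            1/(w - (l:ℂ))^2 - 1/(l:ℂ)^2)

lemma wp_conj (a b : ℝ) (w : ℂ) :
    starRingEnd ℂ (wpFun ((a:ℂ) - b*Complex.I) ((a:ℂ) + b*Complex.I) w)
      = wpFun ((a:ℂ) - b*Complex.I) ((a:ℂ) + b*Complex.I) (starRingEnd ℂ w) := by
  set ω₁ : ℂ := (a:ℂ) - b*Complex.I with hω₁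
  set ω₂ : ℂ := (a:ℂ) + b*Complex.I with hω₂
  have hmem : ∀ l, l ∈ latticeSet ω₁ ω₂ → starRingEnd ℂ l ∈ latticeSet ω₁ ω₂ := by
    rintro l ⟨m, n, rfl⟩
    refine ⟨n, m, ?_⟩
    simp only [map_add, map_mul, map_intCast, map_ofNat, hω₁, hω₂, map_sub,
      Complex.conj_ofReal, Complex.conj_I]
    ring
  have h0 : ∀ l : ℂ, l ≠ 0 → starRingEnd ℂ l ≠ 0 := by
    intro l hl h; exact hl (by simpa using congrArg (starRingEnd ℂ) h)
  have hinv : Function.Involutive (fun x : ℂ => starRingEnd ℂ x) :=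
    fun x => Complex.conj_conj x
  set C := symEquiv ω₁ ω₂ (fun x => starRingEnd ℂ x) hinv hmem h0 with hC
  unfold wpFun
  rw [map_add, map_div₀, map_one, map_pow]
  congr 1
  rw [show (starRingEnd ℂ) (∑' l : {l : ℂ // l ∈ latticeSet ω₁ ω₂ ∧ l ≠ 0},
      (1/(w - (l:ℂ))^2 - 1/(l:ℂ)^2)) = star (∑' l : {l : ℂ // l ∈ latticeSet ω₁ ω₂ ∧ l ≠ 0},
      (1/(w - (l:ℂ))^2 - 1/(l:ℂ)^2)) from rfl, tsum_star]
  calc (∑' l : {l : ℂ // l ∈ latticeSet ω₁ ω₂ ∧ l ≠ 0},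
          star (1/(w - (l:ℂ))^2 - 1/(l:ℂ)^2))
      = ∑' l : {l : ℂ // l ∈ latticeSet ω₁ ω₂ ∧ l ≠ 0},
          (1/(starRingEnd ℂ w - (C l : ℂ))^2 - 1/(C l : ℂ)^2) := by
        refine tsum_congr fun l => ?_
        have h1 : (C l : ℂ) = starRingEnd ℂ (l : ℂ) := rfl
        rw [h1]
        rw [show star (1/(w - (l:ℂ))^2 - 1/(l:ℂ)^2)
          = starRingEnd ℂ (1/(w - (l:ℂ))^2 - 1/(l:ℂ)^2) from rfl]
        rw [map_sub, map_div₀, map_div₀, map_one, map_pow, map_pow, map_sub]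
    _ = _ := C.tsum_eq (fun l : {l : ℂ // l ∈ latticeSet ω₁ ω₂ ∧ l ≠ 0} =>
          1/(starRingEnd ℂ w - (l:ℂ))^2 - 1/(l:ℂ)^2)

lemma φ_shift (a b : ℝ) (m n : ℤ) :
    φ a b (m, n - 1) = φ a b (m, n) - 2*((a:ℂ) + b*Complex.I) := by
  simp only [φ]
  push_cast
  ring

lemma wp_periodic (a b : ℝ) (ha : 0 < a) (hb : 0 < b) (w : ℂ) :
    wpFun ((a:ℂ) - b*Complex.I) ((a:ℂ) + b*Complex.I) (w + 2*((a:ℂ) + b*Complex.I))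
      = wpFun ((a:ℂ) - b*Complex.I) ((a:ℂ) + b*Complex.I) w := by
  set ω₂ : ℂ := (a:ℂ) + b*Complex.I with hω₂
  set h : ℤ × ℤ → ℂ := fun p => 1/(w + 2*ω₂ - φ a b p)^2 - 1/(w - φ a b p)^2 with hdef
  have hsum : Summable h := by
    have h1 := sumF a b ha hb (w + 2*ω₂)
    have h2 := sumF a b ha hb w
    exact (h1.sub h2).congr fun p => by simp only [hdef]; ring
  -- the total sum of h over ℤ × ℤ is zero, by telescoping in each row
  have htot : ∑' p : ℤ × ℤ, h p = 0 := by
    have hu1 : ∀ m : ℤ, Summable (fun n : ℤ => 1/(w - φ a b (m, n))^2) :=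
      fun m => sumU a b ha hb w m
    have hu2 : ∀ m : ℤ, Summable (fun n : ℤ => 1/(w - φ a b (m, n - 1))^2) := by
      intro m
      have := ((Equiv.subRight (1:ℤ)).summable_iff
        (f := fun n : ℤ => 1/(w - φ a b (m, n))^2)).mpr (hu1 m)
      exact this.congr fun n => rfl
    have key : ∀ m n : ℤ, h (m, n)
        = 1/(w - φ a b (m, n - 1))^2 - 1/(w - φ a b (m, n))^2 := by
      intro m n
      simp only [hdef]
      rw [φ_shift a b m n]
      congr 3
      ring
    have hrows : ∀ m : ℤ, Summable (fun n : ℤ => h (m, n)) := fun m =>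
      ((hu2 m).sub (hu1 m)).congr fun n => (key m n).symm
    rw [Summable.tsum_prod' hsum hrows]
    have row : ∀ m : ℤ, (∑' n : ℤ, h (m, n)) = 0 := by
      intro m
      calc (∑' n : ℤ, h (m, n))
          = ∑' n : ℤ, (1/(w - φ a b (m, n - 1))^2 - 1/(w - φ a b (m, n))^2) :=
            tsum_congr (key m)
        _ = (∑' n : ℤ, 1/(w - φ a b (m, n - 1))^2) - ∑' n : ℤ, 1/(w - φ a b (m, n))^2 :=
            Summable.tsum_sub (hu2 m) (hu1 m)
        _ = 0 := sub_eq_zero.mpr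
            ((Equiv.subRight (1:ℤ)).tsum_eq (fun n : ℤ => 1/(w - φ a b (m, n))^2))
    simp only [row, tsum_zero]
  -- split off the p = 0 term
  have hsplit : ∑' p : ℤ × ℤ, h p
      = h 0 + ∑' p : {p : ℤ × ℤ // p ≠ 0}, h (p : ℤ × ℤ) := by
    rw [Summable.tsum_eq_add_tsum_ite hsum 0]
    congr 1
    calc (∑' p : ℤ × ℤ, if p = 0 then 0 else h p)
        = ∑' p : ℤ × ℤ, Set.indicator {p : ℤ × ℤ | p ≠ 0} h p := by
          refine tsum_congr fun p => ?_
          by_cases hp : p = 0 <;> simp [Set.indicator, hp]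
      _ = ∑' p : {p : ℤ × ℤ // p ≠ 0}, h (p : ℤ × ℤ) :=
          (tsum_subtype {p : ℤ × ℤ | p ≠ 0} h).symm
  -- now assemble
  have T : ∀ z : ℂ,
      (∑' l : {l : ℂ // l ∈ latticeSet ((a:ℂ) - b*Complex.I) ((a:ℂ) + b*Complex.I) ∧ l ≠ 0},
        (1/(z - (l:ℂ))^2 - 1/(l:ℂ)^2))
      = ∑' p : {p : ℤ × ℤ // p ≠ 0}, (1/(z - φ a b (p : ℤ × ℤ))^2 - 1/(φ a b (p : ℤ × ℤ))^2) :=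
    fun z => tsum_transfer a b ha hb (fun x => 1/(z - x)^2 - 1/x^2)
  have S1 : Summable (fun p : {p : ℤ × ℤ // p ≠ 0} =>
      1/(w + 2*ω₂ - φ a b (p : ℤ × ℤ))^2 - 1/(φ a b (p : ℤ × ℤ))^2) :=
    (sumF a b ha hb (w + 2*ω₂)).subtype _
  have S0 : Summable (fun p : {p : ℤ × ℤ // p ≠ 0} =>
      1/(w - φ a b (p : ℤ × ℤ))^2 - 1/(φ a b (p : ℤ × ℤ))^2) :=
    (sumF a b ha hb w).subtype _
  have hdiff : (∑' p : {p : ℤ × ℤ // p ≠ 0},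
        (1/(w + 2*ω₂ - φ a b (p : ℤ × ℤ))^2 - 1/(φ a b (p : ℤ × ℤ))^2))
      - (∑' p : {p : ℤ × ℤ // p ≠ 0},
        (1/(w - φ a b (p : ℤ × ℤ))^2 - 1/(φ a b (p : ℤ × ℤ))^2))
      = ∑' p : {p : ℤ × ℤ // p ≠ 0}, h (p : ℤ × ℤ) := by
    rw [← Summable.tsum_sub S1 S0]
    refine tsum_congr fun p => ?_
    simp only [hdef]
    ring
  have h00 : h 0 = 1/(w + 2*ω₂)^2 - 1/w^2 := by
    simp only [hdef]
    have : φ a b 0 = 0 := by simp [φ]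
    rw [this, sub_zero, sub_zero]
  unfold wpFun
  rw [T, T]
  have := hsplit ▸ htot
  rw [h00] at this
  linear_combination this + hdiff

end KW

/-- For a rhombic lattice, with c = √((e₁-e₃)(e₃-e₂)) chosen purely imaginary
(c = -i|c|), Karcher's symmetric Weierstrass function satisfies
wp(-z̄ + 2ω₁) = -conj(wp z). -/
theorem karcherWp_reflection (a b : ℝ) (ha : 0 < a) (hb : 0 < b)
    (ω₁ ω₂ : ℂ) (hω₁ : ω₁ = a - b*Complex.I) (hω₂ : ω₂ = a + b*Complex.I)
    (e₁ e₂ e₃ : ℂ)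
    (he₁ : e₁ = wpFun ω₁ ω₂ ω₂) (he₂ : e₂ = wpFun ω₁ ω₂ ω₁)
    (he₃ : e₃ = wpFun ω₁ ω₂ (ω₁ + ω₂))
    (c : ℂ) (hc2 : c^2 = (e₁ - e₃)*(e₃ - e₂)) (hc : c = -Complex.I * (‖c‖ : ℂ)) :
    ∀ z : ℂ, karcherWp ω₁ ω₂ c e₃ (-(starRingEnd ℂ z) + 2*ω₁) =
      -(starRingEnd ℂ (karcherWp ω₁ ω₂ c e₃ z)) := by
  intro z
  subst hω₁ hω₂ he₃
  set ω₁ : ℂ := (a:ℂ) - b*Complex.I with hw1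
  set ω₂ : ℂ := (a:ℂ) + b*Complex.I with hw2
  have hconj1 : starRingEnd ℂ ω₁ = ω₂ := by
    rw [hw1, hw2, map_sub, map_mul, Complex.conj_I, Complex.conj_ofReal, Complex.conj_ofReal]
    ring
  have hconj2 : starRingEnd ℂ ω₂ = ω₁ := by
    rw [hw1, hw2, map_add, map_mul, Complex.conj_I, Complex.conj_ofReal, Complex.conj_ofReal]
    ring
  have hcc : starRingEnd ℂ c = -c := by
    rw [hc, map_mul, map_neg, Complex.conj_I, Complex.conj_ofReal]
    ring
  have key : wpFun ω₁ ω₂ (-(starRingEnd ℂ z) + 2*ω₁ - ω₁ - ω₂)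
      = starRingEnd ℂ (wpFun ω₁ ω₂ (z - ω₁ - ω₂)) := by
    calc wpFun ω₁ ω₂ (-(starRingEnd ℂ z) + 2*ω₁ - ω₁ - ω₂)
        = wpFun ω₁ ω₂ (-(starRingEnd ℂ z) + ω₁ - ω₂) := by congr 1; ring
      _ = wpFun ω₁ ω₂ ((-(starRingEnd ℂ z) + ω₁ - ω₂) + 2*ω₂) :=
          (KW.wp_periodic a b ha hb (-(starRingEnd ℂ z) + ω₁ - ω₂)).symm
      _ = wpFun ω₁ ω₂ (-(starRingEnd ℂ z - ω₁ - ω₂)) := by congr 1; ring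
      _ = wpFun ω₁ ω₂ (starRingEnd ℂ z - ω₁ - ω₂) := KW.wp_even ω₁ ω₂ _
      _ = wpFun ω₁ ω₂ (starRingEnd ℂ (z - ω₁ - ω₂)) := by
          congr 1
          rw [map_sub, map_sub, hconj1, hconj2]
          ring
      _ = starRingEnd ℂ (wpFun ω₁ ω₂ (z - ω₁ - ω₂)) := (KW.wp_conj a b _).symm
  have he3c : starRingEnd ℂ (wpFun ω₁ ω₂ (ω₁ + ω₂)) = wpFun ω₁ ω₂ (ω₁ + ω₂) := by
    rw [KW.wp_conj a b]
    congr 1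
    rw [map_add, hconj1, hconj2]
    ring
  unfold karcherWp
  rw [map_div₀, map_sub, he3c, hcc, div_neg, neg_neg]
  rw [key]
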